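/- For i ≠ j, a < k_i, b < k_j, define in the space of rational functions on ℂ the product of principal parts P = (z−q_i)^{-(a+1)}·(z−q_j)^{-(b+1)}. Then P decomposes uniquely as P = Σ_{r=1}^{a+1} A_r (z−q_i)^{-r} + Σ_{s=1}^{b+1} B_s (z−q_j)^{-s} with coefficients A_r, B_s that are rational functions of q_i − q_j alone (explicitly, given by binomial expansion: A_{a+1−m} = (−1)^m binom(b+m, m) (q_i−q_j)^{-(b+1+m)} and symmetrically for B). In particular, the structure constants of the product ∂/∂v_{i,a} ∘ ∂/∂v_{j,b} in the v-frame of H_{0,K} depend only on q_i − q_j and not on K. -/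
import Mathlib

open Finset Polynomial

noncomputable def PPc (b : ℕ) (w : ℂ) (m : ℕ) : ℂ :=
  (-1 : ℂ) ^ m * ((b + m).choose m : ℂ) * w ^ (-(b + 1 + m : ℤ))

noncomputable def PP (a b : ℕ) (x y : ℂ) : ℂ :=
  ∑ m ∈ range (a + 1), PPc b (y - x) m * x ^ (-((a + 1 - m : ℕ) : ℤ))

lemma recur (a b : ℕ) (x y : ℂ) (hx : x ≠ 0) (hy : y ≠ 0) (hw : y - x ≠ 0) :
    x ^ (-(a+1:ℤ)) * y ^ (-(b+1:ℤ)) =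
      (y - x)⁻¹ * (x ^ (-(a+1:ℤ)) * y ^ (-(b:ℤ)) - x ^ (-(a:ℤ)) * y ^ (-(b+1:ℤ))) := by
  have e1 : x ^ (-(a:ℤ)) = x ^ (-(a+1:ℤ)) * x := by
    rw [← zpow_add_one₀ hx]; ring_nf
  have e2 : y ^ (-(b:ℤ)) = y ^ (-(b+1:ℤ)) * y := by
    rw [← zpow_add_one₀ hy]; ring_nf
  rw [e1, e2]
  have h := inv_mul_cancel₀ hw
  linear_combination (-(x ^ (-(a+1:ℤ)) * y ^ (-(b+1:ℤ)))) * h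

lemma coeff_step (b m : ℕ) (w : ℂ) (hw : w ≠ 0) :
    w⁻¹ * PPc b w (m+1) - w⁻¹ * PPc (b+1) w m = PPc (b+1) w (m+1) := by
  simp only [PPc]
  rw [show (-((b:ℤ) + 1 + ((m:ℕ)+1 : ℕ)) : ℤ) = -((b+m+2 : ℕ) : ℤ) by push_cast; ring,
      show (-(((b:ℕ)+1 : ℕ) + 1 + (m:ℤ)) : ℤ) = -((b+m+2 : ℕ) : ℤ) by push_cast; ring,
      show (-(((b:ℕ)+1 : ℕ) + 1 + (((m:ℕ)+1 : ℕ)) : ℤ) : ℤ) = -((b+m+3 : ℕ) : ℤ) by push_cast; ring]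
  simp only [zpow_neg, zpow_natCast]
  have h2 : (w:ℂ) ^ (b+m+2) ≠ 0 := pow_ne_zero _ hw
  have h3 : (w:ℂ) ^ (b+m+3) ≠ 0 := pow_ne_zero _ hw
  field_simp
  rw [show b + (m+1) = b+m+1 by ring, show b+1+m = b+m+1 by ring,
      show b+1+(m+1) = (b+m+1)+1 by ring,
      Nat.choose_succ_succ (b+m+1) m]
  push_cast
  ring_nf
  rw [Nat.succ_eq_add_one, Nat.add_comm 1 m]
  ring

lemma coeff_step0 (b : ℕ) (w : ℂ) (hw : w ≠ 0) :
    w⁻¹ * PPc b w 0 = PPc (b+1) w 0 := by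
  simp only [PPc]
  rw [show (-((b:ℤ) + 1 + ((0:ℕ):ℤ)) : ℤ) = -((b+1 : ℕ) : ℤ) by push_cast; ring,
      show (-(((b:ℕ)+1 : ℕ) + 1 + ((0:ℕ):ℤ)) : ℤ) = -((b+2 : ℕ) : ℤ) by push_cast; ring]
  simp only [zpow_neg, zpow_natCast, pow_zero, Nat.choose_zero_right, Nat.add_zero,
    Nat.cast_one, one_mul, mul_one]
  rw [show b+2 = (b+1)+1 by ring, pow_succ, mul_inv]
  ring

lemma pascal_step (a b : ℕ) (x y : ℂ) (hw : y - x ≠ 0) :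
    (y-x)⁻¹ * PP (a+1) b x y - (y-x)⁻¹ * PP a (b+1) x y = PP (a+1) (b+1) x y := by
  simp only [PP]
  rw [Finset.sum_range_succ' (fun m => PPc b (y-x) m * x ^ (-((a+1+1-m : ℕ) : ℤ))) (a+1),
      Finset.sum_range_succ' (fun m => PPc (b+1) (y-x) m * x ^ (-((a+1+1-m : ℕ) : ℤ))) (a+1)]
  simp only [show ∀ m:ℕ, a+1+1-(m+1) = a+1-m from fun m => by omega]
  rw [mul_add, mul_sum, mul_sum, add_sub_right_comm, ← Finset.sum_sub_distrib]
  congr 1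
  · apply Finset.sum_congr rfl
    intro m hm
    have h := coeff_step b m (y-x) hw
    calc (y-x)⁻¹ * (PPc b (y-x) (m+1) * x ^ (-((a+1-m : ℕ) : ℤ)))
          - (y-x)⁻¹ * (PPc (b+1) (y-x) m * x ^ (-((a+1-m : ℕ) : ℤ)))
        = ((y-x)⁻¹ * PPc b (y-x) (m+1) - (y-x)⁻¹ * PPc (b+1) (y-x) m)
            * x ^ (-((a+1-m : ℕ) : ℤ)) := by ring
      _ = PPc (b+1) (y-x) (m+1) * x ^ (-((a+1-m : ℕ) : ℤ)) := by rw [h]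
  · rw [← mul_assoc, coeff_step0 b (y-x) hw]

lemma coeff_step0' (m : ℕ) (w : ℂ) (hw : w ≠ 0) :
    -(w⁻¹ * PPc 0 w m) = PPc 0 w (m+1) := by
  simp only [PPc, Nat.zero_add, Nat.choose_self, Nat.cast_one, mul_one]
  rw [show (-((0:ℕ) + 1 + (m:ℤ)) : ℤ) = -((m+1 : ℕ) : ℤ) by push_cast; ring,
      show (-((0:ℕ) + 1 + ((m:ℕ)+1 : ℕ) : ℤ) : ℤ) = -((m+2 : ℕ) : ℤ) by push_cast; ring]
  simp only [zpow_neg, zpow_natCast]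
  rw [show m+2 = (m+1)+1 by ring, pow_succ (w) (m+1), mul_inv, pow_succ (-1:ℂ) m]
  ring

lemma pascal_step0 (a : ℕ) (x y : ℂ) (hw : y - x ≠ 0) :
    (y-x)⁻¹ * x ^ (-((a:ℤ)+2)) - (y-x)⁻¹ * PP a 0 x y = PP (a+1) 0 x y := by
  simp only [PP]
  rw [Finset.sum_range_succ' (fun m => PPc 0 (y-x) m * x ^ (-((a+1+1-m : ℕ) : ℤ))) (a+1)]
  simp only [show ∀ m:ℕ, a+1+1-(m+1) = a+1-m from fun m => by omega, Nat.sub_zero]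
  have hP : PPc 0 (y-x) 0 = (y-x)⁻¹ := by
    simp only [PPc]
    norm_num
  have tail : (y-x)⁻¹ * x ^ (-((a:ℤ)+2)) = PPc 0 (y-x) 0 * x ^ (-((a+1+1 : ℕ) : ℤ)) := by
    rw [hP, show (-((a:ℤ)+2)) = -((a+1+1 : ℕ) : ℤ) by push_cast; ring]
  have hsum : ∑ m ∈ Finset.range (a+1), (y-x)⁻¹ * (PPc 0 (y-x) m * x ^ (-((a+1-m:ℕ):ℤ)))
      = -∑ m ∈ Finset.range (a+1), PPc 0 (y-x) (m+1) * x ^ (-((a+1-m:ℕ):ℤ)) := by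
    rw [← Finset.sum_neg_distrib]
    apply Finset.sum_congr rfl
    intro m hm
    rw [← coeff_step0' m (y-x) hw]
    ring
  rw [mul_sum, hsum, tail]
  ring

lemma PP_left_step (a : ℕ) (x y : ℂ) (hw : y - x ≠ 0) :
    -((y-x)⁻¹ * PP 0 a y x) = PP 0 (a+1) y x := by
  have hw' : x - y ≠ 0 := fun h => hw (by rw [← neg_sub x y, h, neg_zero])
  simp only [PP, zero_add, Finset.sum_range_one]
  have h6 : (y-x)⁻¹ = -(x-y)⁻¹ := by rw [← neg_sub x y, inv_neg]
  rw [h6]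
  have := coeff_step0 a (x-y) hw'
  rw [← this]
  ring

lemma key : ∀ (n a b : ℕ) (x y : ℂ), a + b = n → x ≠ 0 → y ≠ 0 → y - x ≠ 0 →
    x ^ (-((a:ℤ)+1)) * y ^ (-((b:ℤ)+1)) = PP a b x y + PP b a y x := by
  intro n
  induction n with
  | zero =>
    intro a b x y hab hx hy hw
    obtain ⟨rfl, rfl⟩ : a = 0 ∧ b = 0 := by omega
    have hw' : x - y ≠ 0 := fun h => hw (by rw [← neg_sub x y, h, neg_zero])
    simp only [PP, PPc, Finset.sum_range_one]
    norm_num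
    field_simp
    ring
  | succ n ih =>
    intro a b x y hab hx hy hw
    have hw' : x - y ≠ 0 := fun h => hw (by rw [← neg_sub x y, h, neg_zero])
    have h6 : (x-y)⁻¹ = -(y-x)⁻¹ := by rw [← neg_sub y x, inv_neg]
    match a, b with
    | 0, 0 => omega
    | a+1, 0 =>
      have h1 := recur (a+1) 0 x y hx hy hw
      have h2 := ih a 0 x y (by omega) hx hy hw
      have h3 := pascal_step0 a x y hw
      have h4 := PP_left_step a x y hw
      push_cast at h1 h2 ⊢
      simp only [neg_zero, zpow_zero, mul_one] at h1
      linear_combination (norm := ring_nf) h1 - (y-x)⁻¹ * h2 + h3 + h4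
    | 0, b+1 =>
      have h1 := recur (b+1) 0 y x hy hx hw'
      have h2 := ih b 0 y x (by omega) hy hx hw'
      have h3 := pascal_step0 b y x hw'
      have h4 := PP_left_step b y x hw'
      push_cast at h1 h2 ⊢
      simp only [neg_zero, zpow_zero, mul_one] at h1
      linear_combination (norm := ring_nf) h1 - (x-y)⁻¹ * h2 + h3 + h4
    | a+1, b+1 =>
      have h1 := recur (a+1) (b+1) x y hx hy hw
      have h2 := ih (a+1) b x y (by omega) hx hy hw
      have h3 := ih a (b+1) x y (by omega) hx hy hw
      have h4 := pascal_step a b x y hw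
      have h5 := pascal_step b a y x hw'
      push_cast at h1 h2 h3 ⊢
      linear_combination (norm := ring_nf) h1 + (y-x)⁻¹ * h2 - (y-x)⁻¹ * h3 + h4 + h5
        + (PP b (a+1) y x - PP (b+1) a y x) * h6

-- reindex lemma
lemma pf_sum_reindex (a : ℕ) (F : ℕ → ℂ) :
    ∑ m ∈ Finset.range (a+1), F m = ∑ r ∈ Finset.Icc 1 (a+1), F (a+1-r) := by
  refine Finset.sum_nbij' (fun m => a+1-m) (fun r => a+1-r) ?_ ?_ ?_ ?_ ?_ <;>
      simp only [Finset.mem_range, Finset.mem_Icc] <;> intro m hm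
  · omega
  · omega
  · omega
  · omega
  · congr 1; omega

-- pf_expand: multiply a principal-part sum by x^(n+1)
lemma pf_expand (x : ℂ) (hx : x ≠ 0) (n : ℕ) (e : ℕ → ℂ) :
    (∑ r ∈ Finset.Icc 1 (n+1), e r * x^(-(r:ℤ))) * x^(n+1) =
      ∑ r ∈ Finset.Icc 1 (n+1), e r * x^(n+1-r) := by
  rw [Finset.sum_mul]
  apply Finset.sum_congr rfl
  intro r hr
  simp only [Finset.mem_Icc] at hr
  rw [mul_assoc]
  congr 1
  rw [← zpow_natCast x (n+1), ← zpow_add₀ hx, ← zpow_natCast x (n+1-r)]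
  congr 1
  omega

-- coefficient extraction
lemma pf_poly_sum_zero (q : ℂ) (n : ℕ) (e : ℕ → ℂ)
    (h : (∑ s ∈ Finset.Icc 1 (n+1), Polynomial.C (e s) * (Polynomial.X - Polynomial.C q)^(n+1-s)) = 0) :
    ∀ s ∈ Finset.Icc 1 (n+1), e s = 0 := by
  intro s hs
  simp only [Finset.mem_Icc] at hs
  have h2 : (∑ s' ∈ Finset.Icc 1 (n+1), Polynomial.C (e s') * (Polynomial.X : ℂ[X])^(n+1-s')) = 0 := by
    have h2' := congrArg (Polynomial.aeval (Polynomial.X + Polynomial.C q : ℂ[X])) h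
    simpa [map_sum, map_mul, map_pow, add_sub_cancel_right] using h2'
  have h3 := congrArg (fun p => Polynomial.coeff p (n+1-s)) h2
  simp only [Polynomial.finset_sum_coeff, Polynomial.coeff_C_mul, Polynomial.coeff_X_pow,
    Polynomial.coeff_zero, mul_ite, mul_one, mul_zero] at h3
  rw [Finset.sum_eq_single s] at h3
  · simpa using h3
  · intro s' hs' hne
    simp only [Finset.mem_Icc] at hs'
    rw [if_neg (by omega)]
  · intro hnot
    exact absurd (Finset.mem_Icc.mpr (by omega)) hnot

-- core uniqueness
lemma pf_unique_zero (qi qj : ℂ) (hne : qi ≠ qj) (a b : ℕ) (c d : ℕ → ℂ)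
    (h : ∀ z : ℂ, z ≠ qi → z ≠ qj →
      (∑ r ∈ Finset.Icc 1 (a+1), c r * (z-qi)^(-(r:ℤ))) +
        ∑ s ∈ Finset.Icc 1 (b+1), d s * (z-qj)^(-(s:ℤ)) = 0) :
    (∀ r ∈ Finset.Icc 1 (a+1), c r = 0) ∧ (∀ s ∈ Finset.Icc 1 (b+1), d s = 0) := by
  set Pg : ℂ[X] := ∑ r ∈ Finset.Icc 1 (a+1), Polynomial.C (c r) * (Polynomial.X - Polynomial.C qi)^(a+1-r) with hPg
  set Pf : ℂ[X] := ∑ s ∈ Finset.Icc 1 (b+1), Polynomial.C (d s) * (Polynomial.X - Polynomial.C qj)^(b+1-s) with hPf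
  have hP : Pg * (Polynomial.X - Polynomial.C qj)^(b+1) + Pf * (Polynomial.X - Polynomial.C qi)^(a+1) = 0 := by
    apply Polynomial.eq_zero_of_infinite_isRoot
    apply Set.Infinite.mono (s := ({qi, qj} : Set ℂ)ᶜ)
    · intro z hz
      simp only [Set.mem_compl_iff, Set.mem_insert_iff, Set.mem_singleton_iff, not_or] at hz
      obtain ⟨hz1, hz2⟩ := hz
      have hx : z - qi ≠ 0 := sub_ne_zero.mpr hz1
      have hy : z - qj ≠ 0 := sub_ne_zero.mpr hz2
      have hz0 := h z hz1 hz2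
      simp only [Set.mem_setOf_eq, Polynomial.IsRoot, Polynomial.eval_add, Polynomial.eval_mul,
        Polynomial.eval_pow, Polynomial.eval_finset_sum, Polynomial.eval_sub, Polynomial.eval_X,
        Polynomial.eval_C, hPg, hPf]
      rw [← pf_expand (z - qi) hx a c, ← pf_expand (z - qj) hy b d]
      have hprod : (z-qi)^(a+1) * (z-qj)^(b+1) ≠ 0 :=
        mul_ne_zero (pow_ne_zero _ hx) (pow_ne_zero _ hy)
      have : ((∑ r ∈ Finset.Icc 1 (a+1), c r * (z-qi)^(-(r:ℤ))) +
        ∑ s ∈ Finset.Icc 1 (b+1), d s * (z-qj)^(-(s:ℤ))) * ((z-qi)^(a+1) * (z-qj)^(b+1)) = 0 := by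
        rw [hz0, zero_mul]
      calc (∑ r ∈ Finset.Icc 1 (a+1), c r * (z-qi)^(-(r:ℤ))) * (z-qi)^(a+1) * (z-qj)^(b+1) +
            (∑ s ∈ Finset.Icc 1 (b+1), d s * (z-qj)^(-(s:ℤ))) * (z-qj)^(b+1) * (z-qi)^(a+1)
          = ((∑ r ∈ Finset.Icc 1 (a+1), c r * (z-qi)^(-(r:ℤ))) +
            ∑ s ∈ Finset.Icc 1 (b+1), d s * (z-qj)^(-(s:ℤ))) * ((z-qi)^(a+1) * (z-qj)^(b+1)) := by ring
        _ = 0 := this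
    · exact Set.Finite.infinite_compl (by simp)
  -- coprimality and degree argument
  have hcop : IsCoprime ((Polynomial.X - Polynomial.C qj) : ℂ[X]) (Polynomial.X - Polynomial.C qi) :=
    Polynomial.isCoprime_X_sub_C_of_isUnit_sub ((sub_ne_zero.mpr (Ne.symm hne)).isUnit)
  have hdvd' : (Polynomial.X - Polynomial.C qj)^(b+1) ∣ Pf * (Polynomial.X - Polynomial.C qi)^(a+1) :=
    ⟨-Pg, by linear_combination hP⟩
  have hdvdPf : (Polynomial.X - Polynomial.C qj)^(b+1) ∣ Pf :=
    (hcop.pow (m := b+1) (n := a+1)).dvd_of_dvd_mul_right hdvd'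
  have hdeg : Pf.degree ≤ (b : WithBot ℕ) := by
    apply le_trans (Polynomial.degree_sum_le _ _)
    apply Finset.sup_le
    intro s hs
    simp only [Finset.mem_Icc] at hs
    calc ((Polynomial.C (d s) * (Polynomial.X - Polynomial.C qj)^(b+1-s)).degree)
        ≤ (Polynomial.C (d s)).degree + ((Polynomial.X - Polynomial.C qj)^(b+1-s)).degree :=
          Polynomial.degree_mul_le _ _
      _ ≤ 0 + ((b+1-s : ℕ) : WithBot ℕ) := by
          apply add_le_add Polynomial.degree_C_le
          rw [Polynomial.degree_pow, Polynomial.degree_X_sub_C]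
          simp
      _ ≤ (b : WithBot ℕ) := by
          rw [zero_add]
          exact_mod_cast Nat.cast_le.mpr (by omega : b+1-s ≤ b)
  have hPf0 : Pf = 0 := by
    by_contra hF
    have h1 := Polynomial.degree_le_of_dvd hdvdPf hF
    rw [Polynomial.degree_pow, Polynomial.degree_X_sub_C] at h1
    simp only [nsmul_eq_mul, mul_one] at h1
    have h2 : ((b+1 : ℕ) : WithBot ℕ) ≤ (b : WithBot ℕ) := by
      refine le_trans ?_ hdeg
      exact_mod_cast h1
    exact absurd (Nat.cast_le.mp h2) (by omega)
  have hPg0 : Pg = 0 := by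
    have h0 : Pg * (Polynomial.X - Polynomial.C qj)^(b+1) = 0 := by
      have := hP
      rw [hPf0, zero_mul, add_zero] at this
      exact this
    rcases mul_eq_zero.mp h0 with h' | h'
    · exact h'
    · exact absurd h' (pow_ne_zero _ (Polynomial.X_sub_C_ne_zero qj))
  exact ⟨pf_poly_sum_zero qi a c hPg0, pf_poly_sum_zero qj b d hPf0⟩

/-- Partial fraction decomposition of (z−q_i)^{-(a+1)}(z−q_j)^{-(b+1)}: it decomposes
uniquely as a sum of principal parts at q_i and q_j with explicit binomial
coefficients A_{a+1−m} = (−1)^m C(b+m,m)(q_i−q_j)^{-(b+1+m)} (and symmetrically),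
which depend only on q_i − q_j. Hence the structure constants of
∂/∂v_{i,a} ∘ ∂/∂v_{j,b} in the v-frame of H_{0,K} do not depend on K. -/
theorem stmt18 (qi qj : ℂ) (hne : qi ≠ qj) (a b : ℕ) :
    (∀ z : ℂ, z ≠ qi → z ≠ qj →
      (z - qi) ^ (-(a + 1 : ℤ)) * (z - qj) ^ (-(b + 1 : ℤ)) =
        (∑ m ∈ Finset.range (a + 1),
          ((-1 : ℂ) ^ m * ((b + m).choose m : ℂ) * (qi - qj) ^ (-(b + 1 + m : ℤ))) *
            (z - qi) ^ (-((a + 1 - m : ℕ) : ℤ))) +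
        ∑ m ∈ Finset.range (b + 1),
          ((-1 : ℂ) ^ m * ((a + m).choose m : ℂ) * (qj - qi) ^ (-(a + 1 + m : ℤ))) *
            (z - qj) ^ (-((b + 1 - m : ℕ) : ℤ))) ∧
    ∀ A B : ℕ → ℂ,
      (∀ z : ℂ, z ≠ qi → z ≠ qj →
        (z - qi) ^ (-(a + 1 : ℤ)) * (z - qj) ^ (-(b + 1 : ℤ)) =
          (∑ r ∈ Finset.Icc 1 (a + 1), A r * (z - qi) ^ (-(r : ℤ))) +
          ∑ s ∈ Finset.Icc 1 (b + 1), B s * (z - qj) ^ (-(s : ℤ))) →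
      (∀ r ∈ Finset.Icc 1 (a + 1),
        A r = (-1 : ℂ) ^ (a + 1 - r) * ((b + (a + 1 - r)).choose (a + 1 - r) : ℂ) *
          (qi - qj) ^ (-(b + 1 + (a + 1 - r) : ℤ))) ∧
      ∀ s ∈ Finset.Icc 1 (b + 1),
        B s = (-1 : ℂ) ^ (b + 1 - s) * ((a + (b + 1 - s)).choose (b + 1 - s) : ℂ) *
          (qj - qi) ^ (-(a + 1 + (b + 1 - s) : ℤ)) := by
  have hqij : qi - qj ≠ 0 := sub_ne_zero.mpr hne
  have hqji : qj - qi ≠ 0 := sub_ne_zero.mpr (Ne.symm hne)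
  have hex : ∀ z : ℂ, z ≠ qi → z ≠ qj →
      (z - qi) ^ (-(a + 1 : ℤ)) * (z - qj) ^ (-(b + 1 : ℤ)) =
        (∑ m ∈ Finset.range (a + 1),
          ((-1 : ℂ) ^ m * ((b + m).choose m : ℂ) * (qi - qj) ^ (-(b + 1 + m : ℤ))) *
            (z - qi) ^ (-((a + 1 - m : ℕ) : ℤ))) +
        ∑ m ∈ Finset.range (b + 1),
          ((-1 : ℂ) ^ m * ((a + m).choose m : ℂ) * (qj - qi) ^ (-(a + 1 + m : ℤ))) *
            (z - qj) ^ (-((b + 1 - m : ℕ) : ℤ)) := by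
    intro z hz1 hz2
    have hx : z - qi ≠ 0 := sub_ne_zero.mpr hz1
    have hy : z - qj ≠ 0 := sub_ne_zero.mpr hz2
    have hw : (z - qj) - (z - qi) ≠ 0 := by
      rw [show (z-qj)-(z-qi) = qi - qj by ring]
      exact hqij
    have hk := key (a+b) a b (z-qi) (z-qj) rfl hx hy hw
    rw [hk]
    simp only [PP, PPc, show (z-qj)-(z-qi) = qi-qj from by ring,
      show (z-qi)-(z-qj) = qj-qi from by ring]
  refine ⟨hex, ?_⟩
  intro A B hAB
  -- explicit coefficients in Icc form
  set A' : ℕ → ℂ := fun r => (-1 : ℂ) ^ (a + 1 - r) * ((b + (a + 1 - r)).choose (a + 1 - r) : ℂ) *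
          (qi - qj) ^ (-(b + 1 + (a + 1 - r) : ℤ)) with hA'
  set B' : ℕ → ℂ := fun s => (-1 : ℂ) ^ (b + 1 - s) * ((a + (b + 1 - s)).choose (b + 1 - s) : ℂ) *
          (qj - qi) ^ (-(a + 1 + (b + 1 - s) : ℤ)) with hB'
  have hexIcc : ∀ z : ℂ, z ≠ qi → z ≠ qj →
      (z - qi) ^ (-(a + 1 : ℤ)) * (z - qj) ^ (-(b + 1 : ℤ)) =
        (∑ r ∈ Finset.Icc 1 (a + 1), A' r * (z - qi) ^ (-(r : ℤ))) +
          ∑ s ∈ Finset.Icc 1 (b + 1), B' s * (z - qj) ^ (-(s : ℤ)) := by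
    intro z hz1 hz2
    rw [hex z hz1 hz2]
    congr 1
    · rw [pf_sum_reindex a (fun m =>
        ((-1 : ℂ) ^ m * ((b + m).choose m : ℂ) * (qi - qj) ^ (-(b + 1 + m : ℤ))) *
          (z - qi) ^ (-((a + 1 - m : ℕ) : ℤ)))]
      apply Finset.sum_congr rfl
      intro r hr
      simp only [Finset.mem_Icc] at hr
      simp only [hA']
      congr 2
      · congr 1
        push_cast [Nat.cast_sub (by omega : r ≤ a + 1)]
        ring
      · congr 1
        omega
    · rw [pf_sum_reindex b (fun m =>
        ((-1 : ℂ) ^ m * ((a + m).choose m : ℂ) * (qj - qi) ^ (-(a + 1 + m : ℤ))) *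
          (z - qj) ^ (-((b + 1 - m : ℕ) : ℤ)))]
      apply Finset.sum_congr rfl
      intro s hs
      simp only [Finset.mem_Icc] at hs
      simp only [hB']
      congr 2
      · congr 1
        push_cast [Nat.cast_sub (by omega : s ≤ b + 1)]
        ring
      · congr 1
        omega
  have h0 : ∀ z : ℂ, z ≠ qi → z ≠ qj →
      (∑ r ∈ Finset.Icc 1 (a+1), (A r - A' r) * (z-qi)^(-(r:ℤ))) +
        ∑ s ∈ Finset.Icc 1 (b+1), (B s - B' s) * (z-qj)^(-(s:ℤ)) = 0 := by
    intro z hz1 hz2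
    have h1 := hAB z hz1 hz2
    have h2 := hexIcc z hz1 hz2
    simp only [sub_mul, Finset.sum_sub_distrib]
    linear_combination h2 - h1
  obtain ⟨hc, hd⟩ := pf_unique_zero qi qj hne a b _ _ h0
  constructor
  · intro r hr
    have := hc r hr
    have h := sub_eq_zero.mp this
    rw [h, hA']
  · intro s hs
    have := hd s hs
    have h := sub_eq_zero.mp this
    rw [h, hB']
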